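/- arXiv:2411.08791 — 10 statements merged into one kernel-verified Lean document; each statement's English description precedes it below -/
import Mathlib

section
/- Let f : (0,∞) → ℝ be convex with f(1) = 0 and f(0) := lim_{t→0+} f(t) finite. Then the function g(x) = f(0) + x·(f(1/x) − f(0)) is non-increasing on the interval (0, 1]. -/
open Filter Topology Set

theorem ConvexOn.monotoneOn_secant_of_tendsto_nhdsGT {f : ℝ → ℝ} {a L : ℝ}
    (hf : ConvexOn ℝ (Ioi a) f) (hL : Tendsto f (𝓝[>] a) (𝓝 L)) :
    MonotoneOn (fun t => (f t - L) / (t - a)) (Ioi a) := by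
  have secant_tendsto : ∀ x ∈ Ioi a,
      Tendsto (fun u => (f x - f u) / (x - u)) (𝓝[>] a) (𝓝 ((f x - L) / (x - a))) :=
    fun x hx => (tendsto_const_nhds.sub hL).div
      (tendsto_const_nhds.sub (tendsto_id.mono_left nhdsWithin_le_nhds))
      (sub_ne_zero.2 (ne_of_gt hx))
  intro s hs t ht hst
  refine le_of_tendsto_of_tendsto (secant_tendsto s hs) (secant_tendsto t ht) ?_
  filter_upwards [Ioo_mem_nhdsGT hs] with u hu
  exact hf.secant_mono (mem_Ioi.2 hu.1) hs ht hu.2.ne' (hu.2.trans_le hst).ne' hst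

theorem g_antitone_general (f : ℝ → ℝ) (f0 : ℝ)
    (hconv : ConvexOn ℝ (Set.Ioi (0:ℝ)) f)
    (hlim : Filter.Tendsto f (nhdsWithin 0 (Set.Ioi 0)) (nhds f0)) :
    AntitoneOn (fun x : ℝ => f0 + x * (f (1 / x) - f0)) (Set.Ioc (0:ℝ) 1) := by
  -- `x * (f (1 / x) - f0)` is the slope of `f` from `(0, f0)` to `1 / x`.
  intro x hx y hy hxy
  have slope_le := hconv.monotoneOn_secant_of_tendsto_nhdsGT hlim
    (one_div_pos.2 hy.1) (one_div_pos.2 hx.1) (one_div_le_one_div_of_le hx.1 hxy)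
  simp only [sub_zero, div_div_eq_mul_div, div_one] at slope_le
  simpa [mul_comm] using slope_le

/-- If `f` is convex on `(0,∞)` with `f 1 = 0` and has finite right limit `f0` at `0`,
then `g x = f0 + x * (f (1/x) - f0)` is non-increasing on `(0,1]`. -/
theorem g_antitone (f : ℝ → ℝ) (f0 : ℝ)
    (hconv : ConvexOn ℝ (Set.Ioi (0:ℝ)) f) (hf1 : f 1 = 0)
    (hlim : Filter.Tendsto f (nhdsWithin 0 (Set.Ioi 0)) (nhds f0)) :
    AntitoneOn (fun x : ℝ => f0 + x * (f (1 / x) - f0)) (Set.Ioc (0:ℝ) 1) :=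
  g_antitone_general f f0 hconv hlim
end

section
/- Under the hypotheses of the diagonal upper bound (K row-stochastic, ε-LDP, qK = q), the minimum diagonal entry satisfies min_i K_{ii} ≤ e^ε q_min / (e^ε q_min + 1 − q_min), where q_min = min_i q_i. -/
open Finset

/-- Under the hypotheses of the diagonal upper bound, the minimum diagonal entry of `K`
is at most `e^ε q_min / (e^ε q_min + 1 - q_min)`. -/
theorem min_diag_upper_bound (n : ℕ) [NeZero n] (ε : ℝ) (hε : 0 ≤ ε)
    (K : Matrix (Fin n) (Fin n) ℝ) (q : Fin n → ℝ)
    (hKnn : ∀ i j, 0 ≤ K i j) (hKrow : ∀ i, ∑ j, K i j = 1)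
    (hLDP : ∀ i j k, K i k ≤ Real.exp ε * K j k)
    (hqpos : ∀ i, 0 < q i) (hqsum : ∑ i, q i = 1)
    (hinv : ∀ i, ∑ j, q j * K j i = q i) :
    Finset.univ.inf' Finset.univ_nonempty (fun i => K i i) ≤
      Real.exp ε * Finset.univ.inf' Finset.univ_nonempty q /
        (Real.exp ε * Finset.univ.inf' Finset.univ_nonempty q + 1 -
          Finset.univ.inf' Finset.univ_nonempty q) := by
  obtain ⟨i, _, hi⟩ := Finset.exists_mem_eq_inf' (Finset.univ_nonempty (α := Fin n)) q
  set e := Real.exp ε with he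
  have he1 : 1 ≤ e := Real.one_le_exp hε
  have hepos : 0 < e := lt_of_lt_of_le one_pos he1
  have hqi : 0 < q i := hqpos i
  have hqle : q i ≤ 1 := by
    rw [← hqsum]
    exact Finset.single_le_sum (fun j _ => (hqpos j).le) (Finset.mem_univ i)
  -- the rest of q: 1 - q i = ∑_{j ≠ i} q j
  have hrest : ∑ j ∈ Finset.univ.erase i, q j = 1 - q i := by
    have := Finset.add_sum_erase Finset.univ q (Finset.mem_univ i)
    rw [hqsum] at this
    linarith
  have hkey : K i i * (q i + (1 - q i) / e) ≤ q i := by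
    have hsplit : ∑ j, q j * K j i = q i * K i i + ∑ j ∈ Finset.univ.erase i, q j * K j i :=
      (Finset.add_sum_erase Finset.univ (fun j => q j * K j i) (Finset.mem_univ i)).symm
    have hbound : ∑ j ∈ Finset.univ.erase i, q j * (K i i / e)
        ≤ ∑ j ∈ Finset.univ.erase i, q j * K j i := by
      refine Finset.sum_le_sum fun j _ => ?_
      refine mul_le_mul_of_nonneg_left ?_ (hqpos j).le
      rw [div_le_iff₀ hepos, mul_comm]
      exact hLDP i j i
    rw [← Finset.sum_mul, hrest] at hbound
    have := hinv i
    rw [hsplit] at this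
    have heq : K i i * (q i + (1 - q i) / e) = q i * K i i + (1 - q i) * (K i i / e) := by
      ring
    linarith
  have hmin : Finset.univ.inf' Finset.univ_nonempty (fun i => K i i) ≤ K i i :=
    Finset.inf'_le _ (Finset.mem_univ i)
  rw [hi]
  refine le_trans hmin ?_
  have hD : 0 < q i + (1 - q i) / e := by
    have : 0 ≤ (1 - q i) / e := div_nonneg (by linarith) hepos.le
    linarith
  have h2 : K i i ≤ q i / (q i + (1 - q i) / e) := by
    rw [le_div_iff₀ hD]; exact hkey
  refine le_trans h2 (le_of_eq ?_)
  have hE : 0 < e * q i + 1 - q i := by nlinarith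
  rw [div_eq_div_iff hD.ne' hE.ne']
  field_simp
  ring
end

section
/- Let K be an n×n row-stochastic matrix with strictly positive entries and let f be convex on (0,∞) with f(1) = 0 and f(0) finite. Then sup over all probability vectors p of the f-divergence D_f(p ‖ pK) equals max_i D_f(δ_i ‖ δ_i K), where δ_i is the i-th Dirac (standard basis) vector; moreover this maximum equals f(0)(1 − K_min) + K_min f(1/K_min), where K_min = min_i K_{ii}. -/
open Finset

/-- The `f`-divergence between distributions `p` and `r` on `Fin n`. -/
noncomputable def fDiv {n : ℕ} (f : ℝ → ℝ) (p r : Fin n → ℝ) : ℝ :=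
  ∑ x, r x * f (p x / r x)

/-- The output distribution `pK` of the mechanism `K` applied to `p`. -/
def push {n : ℕ} (p : Fin n → ℝ) (K : Matrix (Fin n) (Fin n) ℝ) : Fin n → ℝ :=
  fun j => ∑ i, p i * K i j

lemma h_anti (f : ℝ → ℝ) (hconv : ConvexOn ℝ (Set.Ici (0:ℝ)) f)
    {s t : ℝ} (hs : 0 < s) (hst : s ≤ t) :
    f 0 * (1 - t) + t * f (1/t) ≤ f 0 * (1 - s) + s * f (1/s) := by
  have ht : 0 < t := hs.trans_le hst
  have key : f ((s/t) • (1/s) + (1 - s/t) • (0:ℝ)) ≤ (s/t) * f (1/s) + (1 - s/t) * f 0 :=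
    hconv.2 (Set.mem_Ici.2 (by positivity)) (Set.mem_Ici.2 le_rfl) (by positivity)
      (by have := div_le_one_of_le₀ hst ht.le; linarith) (by ring)
  have h1 : (s/t) • (1/s) + (1 - s/t) • (0:ℝ) = 1/t := by
    rw [smul_eq_mul, smul_eq_mul]
    field_simp
    ring
  rw [h1] at key
  have h2 := mul_le_mul_of_nonneg_left key ht.le
  have h3 : t * ((s/t) * f (1/s) + (1 - s/t) * f 0) = s * f (1/s) + (t - s) * f 0 := by
    field_simp
  linarith [h2, h3.symm ▸ h2]

lemma push_single {n : ℕ} (K : Matrix (Fin n) (Fin n) ℝ) (i j : Fin n) :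
    push (Pi.single i 1) K j = K i j := by
  unfold push
  rw [Finset.sum_eq_single_of_mem i (Finset.mem_univ i)]
  · simp
  · intro k _ hk
    rw [Pi.single_eq_of_ne hk, zero_mul]

lemma fDiv_dirac {n : ℕ} (f : ℝ → ℝ) (K : Matrix (Fin n) (Fin n) ℝ)
    (hKrow : ∀ i, ∑ j, K i j = 1) (i : Fin n) :
    fDiv f (Pi.single i 1) (push (Pi.single i 1) K)
      = f 0 * (1 - K i i) + K i i * f (1 / K i i) := by
  unfold fDiv
  have herase : ∑ j ∈ Finset.univ.erase i, K i j = 1 - K i i := by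
    have := Finset.add_sum_erase Finset.univ (fun j => K i j) (Finset.mem_univ i)
    rw [hKrow i] at this
    linarith
  rw [← Finset.add_sum_erase Finset.univ _ (Finset.mem_univ i)]
  have hrest : ∑ j ∈ Finset.univ.erase i,
      push (Pi.single i 1) K j * f ((Pi.single i 1 : Fin n → ℝ) j / push (Pi.single i 1) K j)
      = (1 - K i i) * f 0 := by
    rw [← herase, Finset.sum_mul]
    apply Finset.sum_congr rfl
    intro j hj
    rw [push_single, Pi.single_eq_of_ne (Finset.ne_of_mem_erase hj), zero_div]
  rw [hrest, push_single, Pi.single_eq_same]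
  ring

/-- The supremum of `D_f(p ‖ pK)` over the simplex is attained at a Dirac distribution and
equals `f(0)(1 - K_min) + K_min f(1 / K_min)` where `K_min = min_i K_ii`. -/
theorem sup_fDiv_eq_max_dirac (n : ℕ) [NeZero n] (f : ℝ → ℝ)
    (hconv : ConvexOn ℝ (Set.Ici (0:ℝ)) f) (hf1 : f 1 = 0)
    (K : Matrix (Fin n) (Fin n) ℝ)
    (hKpos : ∀ i j, 0 < K i j) (hKrow : ∀ i, ∑ j, K i j = 1) :
    IsGreatest
      {v : ℝ | ∃ p : Fin n → ℝ, (∀ i, 0 ≤ p i) ∧ ∑ i, p i = 1 ∧ v = fDiv f p (push p K)}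
      (Finset.univ.sup' Finset.univ_nonempty
        (fun i => fDiv f (Pi.single i 1) (push (Pi.single i 1) K))) ∧
    Finset.univ.sup' Finset.univ_nonempty
        (fun i => fDiv f (Pi.single i 1) (push (Pi.single i 1) K)) =
      f 0 * (1 - Finset.univ.inf' Finset.univ_nonempty (fun i => K i i)) +
        Finset.univ.inf' Finset.univ_nonempty (fun i => K i i) *
          f (1 / Finset.univ.inf' Finset.univ_nonempty (fun i => K i i)) := by
  set M := Finset.univ.sup' Finset.univ_nonempty
      (fun i => fDiv f (Pi.single i 1) (push (Pi.single i 1) K)) with hM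
  constructor
  · constructor
    · -- membership
      obtain ⟨i, -, hi⟩ := Finset.exists_mem_eq_sup' Finset.univ_nonempty
        (fun i => fDiv f (Pi.single i 1) (push (Pi.single i 1) K))
      refine ⟨Pi.single i 1, ?_, ?_, hi⟩
      · intro j
        rcases eq_or_ne j i with rfl | h
        · simp
        · rw [Pi.single_eq_of_ne h]
      · simp
    · -- upper bound
      rintro v ⟨p, hp0, hp1, rfl⟩
      have hS : ∀ j, 0 < push p K j := by
        intro j
        obtain ⟨i0, -, hi0⟩ := Finset.exists_ne_zero_of_sum_ne_zero
          (by rw [hp1]; norm_num : ∑ i, p i ≠ 0)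
        exact Finset.sum_pos' (fun i _ => mul_nonneg (hp0 i) (hKpos i j).le)
          ⟨i0, Finset.mem_univ i0, mul_pos ((hp0 i0).lt_of_ne (Ne.symm hi0)) (hKpos i0 j)⟩
      have stepA : fDiv f p (push p K)
          ≤ ∑ i, p i * fDiv f (Pi.single i 1) (push (Pi.single i 1) K) := by
        have hterm : ∀ j, push p K j * f (p j / push p K j)
            ≤ ∑ i, p i * (K i j * f ((Pi.single i 1 : Fin n → ℝ) j / K i j)) := by
          intro j
          set S := push p K j with hSdef
          have hSpos : 0 < S := hS j
          have hSne : S ≠ 0 := hSpos.ne'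
          have hw0 : ∀ i ∈ Finset.univ, 0 ≤ p i * K i j / S :=
            fun i _ => div_nonneg (mul_nonneg (hp0 i) (hKpos i j).le) hSpos.le
          have hw1 : ∑ i, p i * K i j / S = 1 := by
            rw [← Finset.sum_div, hSdef]
            exact div_self hSpos.ne'
          have hmem : ∀ i ∈ (Finset.univ : Finset (Fin n)),
              ((Pi.single i 1 : Fin n → ℝ) j / K i j) ∈ Set.Ici (0:ℝ) := by
            intro i _
            rcases eq_or_ne j i with rfl | h
            · rw [Pi.single_eq_same]
              exact Set.mem_Ici.2 (div_nonneg zero_le_one (hKpos j j).le)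
            · rw [Pi.single_eq_of_ne h, zero_div]
              exact Set.self_mem_Ici
          have jensen := hconv.map_sum_le hw0 hw1 hmem
          have hcomb : ∑ i, (p i * K i j / S) • ((Pi.single i 1 : Fin n → ℝ) j / K i j) = p j / S := by
            have : ∀ i, (p i * K i j / S) • ((Pi.single i 1 : Fin n → ℝ) j / K i j)
                = p i * (Pi.single i 1 : Fin n → ℝ) j / S := by
              intro i
              have hK : K i j ≠ 0 := (hKpos i j).ne'
              rw [smul_eq_mul]
              field_simp
            rw [Finset.sum_congr rfl (fun i _ => this i), ← Finset.sum_div]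
            congr 1
            rw [Finset.sum_eq_single_of_mem j (Finset.mem_univ j)]
            · rw [Pi.single_eq_same, mul_one]
            · intro i _ hi
              rw [Pi.single_eq_of_ne (Ne.symm hi), mul_zero]
          rw [hcomb] at jensen
          calc S * f (p j / S) ≤ S * ∑ i, (p i * K i j / S) * f ((Pi.single i 1 : Fin n → ℝ) j / K i j) :=
                mul_le_mul_of_nonneg_left jensen hSpos.le
            _ = ∑ i, p i * (K i j * f ((Pi.single i 1 : Fin n → ℝ) j / K i j)) := by
                rw [Finset.mul_sum]
                apply Finset.sum_congr rfl
                intro i _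
                field_simp
        calc fDiv f p (push p K) ≤ ∑ j, ∑ i, p i * (K i j * f ((Pi.single i 1 : Fin n → ℝ) j / K i j)) :=
              Finset.sum_le_sum (fun j _ => hterm j)
          _ = ∑ i, p i * fDiv f (Pi.single i 1) (push (Pi.single i 1) K) := by
              rw [Finset.sum_comm]
              apply Finset.sum_congr rfl
              intro i _
              unfold fDiv
              rw [Finset.mul_sum]
              apply Finset.sum_congr rfl
              intro j _
              rw [push_single]
      have stepB : ∑ i, p i * fDiv f (Pi.single i 1) (push (Pi.single i 1) K) ≤ M := by
        calc ∑ i, p i * fDiv f (Pi.single i 1) (push (Pi.single i 1) K)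
            ≤ ∑ i, p i * M := by
              apply Finset.sum_le_sum
              intro i _
              exact mul_le_mul_of_nonneg_left
                (Finset.le_sup' (fun i => fDiv f (Pi.single i 1) (push (Pi.single i 1) K))
                  (Finset.mem_univ i)) (hp0 i)
          _ = M := by rw [← Finset.sum_mul, hp1, one_mul]
      exact stepA.trans stepB
  · -- formula
    set m := Finset.univ.inf' Finset.univ_nonempty (fun i => K i i) with hm
    obtain ⟨i0, -, hi0⟩ := Finset.exists_mem_eq_inf' Finset.univ_nonempty (fun i => K i i)
    have hmpos : 0 < m := by rw [hm, hi0]; exact hKpos i0 i0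
    apply le_antisymm
    · apply Finset.sup'_le
      intro i _
      rw [fDiv_dirac f K hKrow i]
      exact h_anti f hconv hmpos (Finset.inf'_le _ (Finset.mem_univ i))
    · have : f 0 * (1 - m) + m * f (1/m) = fDiv f (Pi.single i0 1) (push (Pi.single i0 1) K) := by
        rw [fDiv_dirac f K hKrow i0, hm, hi0]
      rw [this, hM]
      exact Finset.le_sup' (fun i => fDiv f (Pi.single i 1) (push (Pi.single i 1) K))
        (Finset.mem_univ i0)
end

section
/- For a row-stochastic n×n matrix K with positive entries, sup over probability vectors p of the total variation distance TV(p, pK) equals max_i (1 − K_{ii}). -/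
open Finset

/-- Total variation distance between two distributions on `Fin n`. -/
noncomputable def tv {n : ℕ} (p r : Fin n → ℝ) : ℝ :=
  (1 / 2) * ∑ x, |p x - r x|

/-- The supremum of `TV(p, pK)` over the simplex equals `max_i (1 - K_ii)`. -/
theorem sup_tv_eq_max (n : ℕ) [NeZero n]
    (K : Matrix (Fin n) (Fin n) ℝ)
    (hKpos : ∀ i j, 0 < K i j) (hKrow : ∀ i, ∑ j, K i j = 1) :
    IsGreatest
      {v : ℝ | ∃ p : Fin n → ℝ, (∀ i, 0 ≤ p i) ∧ ∑ i, p i = 1 ∧ v = tv p (push p K)}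
      (Finset.univ.sup' Finset.univ_nonempty (fun i => 1 - K i i)) := by
  have hKle : ∀ i : Fin n, K i i ≤ 1 := by
    intro i
    rw [← hKrow i]
    exact Finset.single_le_sum (fun j _ => (hKpos i j).le) (mem_univ i)
  constructor
  · -- membership
    obtain ⟨i₀, -, hi₀⟩ := Finset.exists_mem_eq_sup' (Finset.univ_nonempty (α := Fin n))
      (fun i => 1 - K i i)
    refine ⟨fun i => if i = i₀ then 1 else 0, ?_, ?_, ?_⟩
    · intro i; dsimp only; split_ifs <;> norm_num
    · simp
    · have hpush : ∀ j, push (fun i => if i = i₀ then 1 else 0) K j = K i₀ j := by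
        intro j
        simp [push, Finset.sum_ite_eq']
      rw [hi₀]
      simp only [tv, hpush]
      rw [← Finset.add_sum_erase _ _ (mem_univ i₀)]
      have h1 : |(if i₀ = i₀ then (1:ℝ) else 0) - K i₀ i₀| = 1 - K i₀ i₀ := by
        rw [if_pos rfl, abs_of_nonneg (by linarith [hKle i₀])]
      have h2 : ∑ j ∈ univ.erase i₀, |(if j = i₀ then (1:ℝ) else 0) - K i₀ j| =
          ∑ j ∈ univ.erase i₀, K i₀ j := by
        refine Finset.sum_congr rfl fun j hj => ?_
        rw [if_neg (Finset.ne_of_mem_erase hj), zero_sub, abs_neg,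
          abs_of_nonneg (hKpos i₀ j).le]
      have h3 : ∑ j ∈ univ.erase i₀, K i₀ j = 1 - K i₀ i₀ := by
        have := hKrow i₀
        rw [← Finset.add_sum_erase _ _ (mem_univ i₀)] at this
        linarith
      rw [h1, h2, h3]; ring
  · -- upper bound
    rintro v ⟨p, hp0, hp1, rfl⟩
    set M := Finset.univ.sup' (Finset.univ_nonempty (α := Fin n)) (fun i => 1 - K i i) with hM
    have hqsum : ∑ j, push p K j = 1 := by
      simp only [push]
      rw [Finset.sum_comm]
      simp_rw [← Finset.mul_sum, hKrow, mul_one]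
      exact hp1
    have key : tv p (push p K) = ∑ x, max (p x - push p K x) 0 := by
      have habs : ∀ x : Fin n, |p x - push p K x| =
          2 * max (p x - push p K x) 0 - (p x - push p K x) := by
        intro x
        rcases le_or_gt (p x - push p K x) 0 with h | h
        · rw [abs_of_nonpos h, max_eq_right h]; ring
        · rw [abs_of_pos h, max_eq_left h.le]; ring
      simp only [tv]
      rw [Finset.sum_congr rfl fun x _ => habs x, Finset.sum_sub_distrib,
        Finset.sum_sub_distrib, hp1, hqsum, ← Finset.mul_sum]
      ring
    rw [key]
    have step1 : ∀ x : Fin n, max (p x - push p K x) 0 ≤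
        ∑ i, p i * max ((if i = x then (1:ℝ) else 0) - K i x) 0 := by
      intro x
      have hrepr : p x - push p K x = ∑ i, p i * ((if i = x then (1:ℝ) else 0) - K i x) := by
        simp only [push, mul_sub]
        rw [Finset.sum_sub_distrib]
        congr 1
        simp [Finset.sum_ite_eq', mul_ite]
      rw [hrepr]
      refine max_le ?_ (Finset.sum_nonneg fun i _ =>
        mul_nonneg (hp0 i) (le_max_right _ _))
      exact Finset.sum_le_sum fun i _ =>
        mul_le_mul_of_nonneg_left (le_max_left _ _) (hp0 i)
    calc ∑ x, max (p x - push p K x) 0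
        ≤ ∑ x, ∑ i, p i * max ((if i = x then (1:ℝ) else 0) - K i x) 0 :=
          Finset.sum_le_sum fun x _ => step1 x
      _ = ∑ i, p i * (1 - K i i) := by
          rw [Finset.sum_comm]
          refine Finset.sum_congr rfl fun i _ => ?_
          rw [← Finset.mul_sum]
          congr 1
          rw [← Finset.add_sum_erase _ _ (mem_univ i)]
          have h1 : max ((if i = i then (1:ℝ) else 0) - K i i) 0 = 1 - K i i := by
            rw [if_pos rfl, max_eq_left (by linarith [hKle i])]
          have h2 : ∑ x ∈ univ.erase i, max ((if i = x then (1:ℝ) else 0) - K i x) 0 = 0 := by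
            refine Finset.sum_eq_zero fun x hx => ?_
            rw [if_neg (Finset.ne_of_mem_erase hx).symm, zero_sub,
              max_eq_right (by linarith [hKpos i x])]
          rw [h1, h2, add_zero]
      _ ≤ ∑ i, p i * M :=
          Finset.sum_le_sum fun i _ => mul_le_mul_of_nonneg_left
            (Finset.le_sup' (f := fun i => 1 - K i i) (mem_univ i)) (hp0 i)
      _ = M := by rw [← Finset.sum_mul, hp1, one_mul]
end

section
/- Let q ∈ Δ(X) with all entries positive, q_min = min_x q(x), ε ≥ 0, and f convex with f(1)=0 and f(0) finite. For any row-stochastic, ε-LDP matrix K with qK = q, sup_{p ∈ Δ(X)} D_f(p ‖ pK) ≥ ((1 − q_min)/(e^ε q_min + 1 − q_min)) f(0) + (e^ε q_min/(e^ε q_min + 1 − q_min)) f((e^ε q_min + 1 − q_min)/(e^ε q_min)). -/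
/-!
The point mass at a coordinate `m` where `q` is minimal gives `D_f(δ_m ‖ δ_m K) = g(K_{mm})` with
`g x = (1 - x) f(0) + x f(1/x)`, and `g` is antitone by convexity of `f`. Invariance of `q` together
with the LDP constraint `K_{mm} ≤ e^ε K_{im}` bounds `K_{mm}` above by `e^ε q_m / (e^ε q_m + 1 - q_m)`.
The supremum is a genuine one: invariance also forces `q_j ≤ e^ε (pK)_j`, so the likelihood ratios
`p_j / (pK)_j` stay in `[0, e^ε / q_min]`, where `f` is bounded by convexity.
-/

open Finset

/-- `D_f(δ ‖ r)` for a point mass `δ` at a coordinate where `r` has mass `x`. -/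
noncomputable def fDivDirac (f : ℝ → ℝ) (x : ℝ) : ℝ :=
  (1 - x) * f 0 + x * f x⁻¹

theorem antitoneOn_fDivDirac {f : ℝ → ℝ} (hf : ConvexOn ℝ (Set.Ici 0) f) :
    AntitoneOn (fDivDirac f) (Set.Ioi 0) := by
  intro x (hx : 0 < x) y (hy : 0 < y) hxy
  have hxy' : x / y ≤ 1 := (div_le_one hy).2 hxy
  -- `1/y` is the convex combination of `0` and `1/x` with weight `x/y` on `1/x`.
  have hcomb : f y⁻¹ ≤ (1 - x / y) * f 0 + x / y * f x⁻¹ := by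
    have h := hf.2 (Set.mem_Ici.2 le_rfl) (Set.mem_Ici.2 (inv_nonneg.2 hx.le))
      (sub_nonneg.2 hxy') (by positivity) (sub_add_cancel 1 (x / y))
    have hpt : (1 - x / y) • (0 : ℝ) + (x / y) • x⁻¹ = y⁻¹ := by
      simp only [smul_eq_mul]
      field_simp
      ring
    rwa [hpt] at h
  have hscaled := mul_le_mul_of_nonneg_left hcomb hy.le
  have hexpand : y * ((1 - x / y) * f 0 + x / y * f x⁻¹) = (y - x) * f 0 + x * f x⁻¹ := by
    field_simp
  unfold fDivDirac
  linarith

theorem fDiv_le_max_of_le_mul {n : ℕ} {f : ℝ → ℝ} (hf : ConvexOn ℝ (Set.Ici 0) f)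
    {p r : Fin n → ℝ} {T : ℝ} (hp : ∀ j, 0 ≤ p j) (hr : ∀ j, 0 < r j) (hr1 : ∑ j, r j = 1)
    (hpT : ∀ j, p j ≤ T * r j) :
    fDiv f p r ≤ max (f 0) (f T) := by
  have hterm : ∀ j, r j * f (p j / r j) ≤ r j * max (f 0) (f T) := fun j => by
    have hratio : p j / r j ∈ Set.Icc 0 T :=
      ⟨div_nonneg (hp j) (hr j).le, (div_le_iff₀ (hr j)).2 (hpT j)⟩
    have hT : T ∈ Set.Ici 0 := le_trans hratio.1 hratio.2
    exact mul_le_mul_of_nonneg_left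
      (hf.le_on_segment (Set.mem_Ici.2 le_rfl) hT (Icc_subset_segment hratio)) (hr j).le
  calc fDiv f p r ≤ ∑ j, r j * max (f 0) (f T) := sum_le_sum fun j _ => hterm j
    _ = max (f 0) (f T) := by rw [← sum_mul, hr1, one_mul]

section Mechanism

variable {n : ℕ} {ε : ℝ} {q : Fin n → ℝ} {K : Matrix (Fin n) (Fin n) ℝ}

theorem sum_push_eq_one {p : Fin n → ℝ} (hp1 : ∑ i, p i = 1) (hKrow : ∀ i, ∑ j, K i j = 1) :
    ∑ j, push p K j = 1 := by
  simp only [push]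
  rw [sum_comm]
  simp only [← mul_sum, hKrow, mul_one, hp1]

theorem le_exp_mul_of_invariant (hq : ∀ i, 0 ≤ q i) (hq1 : ∑ i, q i = 1)
    (hLDP : ∀ i j k, K i k ≤ Real.exp ε * K j k) (hinv : ∀ j, ∑ i, q i * K i j = q j)
    (i j : Fin n) :
    q j ≤ Real.exp ε * K i j :=
  calc q j = ∑ k, q k * K k j := (hinv j).symm
    _ ≤ ∑ k, q k * (Real.exp ε * K i j) :=
        sum_le_sum fun k _ => mul_le_mul_of_nonneg_left (hLDP k i j) (hq k)
    _ = Real.exp ε * K i j := by rw [← sum_mul, hq1, one_mul]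

theorem le_exp_mul_push_of_invariant {p : Fin n → ℝ} (hp : ∀ i, 0 ≤ p i) (hp1 : ∑ i, p i = 1)
    (hq : ∀ i, 0 ≤ q i) (hq1 : ∑ i, q i = 1) (hLDP : ∀ i j k, K i k ≤ Real.exp ε * K j k)
    (hinv : ∀ j, ∑ i, q i * K i j = q j) (j : Fin n) :
    q j ≤ Real.exp ε * push p K j :=
  calc q j = ∑ i, p i * q j := by rw [← sum_mul, hp1, one_mul]
    _ ≤ ∑ i, p i * (Real.exp ε * K i j) := sum_le_sum fun i _ =>
        mul_le_mul_of_nonneg_left (le_exp_mul_of_invariant hq hq1 hLDP hinv i j) (hp i)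
    _ = Real.exp ε * push p K j := by simp only [push, mul_sum, mul_left_comm]

theorem bddAbove_fDiv_push (hq : ∀ i, 0 < q i) (hq1 : ∑ i, q i = 1)
    (hKrow : ∀ i, ∑ j, K i j = 1) (hLDP : ∀ i j k, K i k ≤ Real.exp ε * K j k)
    (hinv : ∀ j, ∑ i, q i * K i j = q j) {f : ℝ → ℝ} (hf : ConvexOn ℝ (Set.Ici 0) f)
    {Q : ℝ} (hQ : 0 < Q) (hQq : ∀ i, Q ≤ q i) :
    BddAbove {v : ℝ | ∃ p : Fin n → ℝ, (∀ i, 0 ≤ p i) ∧ ∑ i, p i = 1 ∧ v = fDiv f p (push p K)} := by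
  refine ⟨max (f 0) (f (Real.exp ε / Q)), ?_⟩
  rintro v ⟨p, hp, hp1, rfl⟩
  have hpush := le_exp_mul_push_of_invariant hp hp1 (fun i => (hq i).le) hq1 hLDP hinv
  refine fDiv_le_max_of_le_mul hf hp (fun j => ?_) (sum_push_eq_one hp1 hKrow) fun j => ?_
  · exact pos_of_mul_pos_right ((hq j).trans_le (hpush j)) (Real.exp_pos ε).le
  · calc p j ≤ 1 := hp1 ▸ single_le_sum (fun i _ => hp i) (mem_univ j)
      _ ≤ q j / Q := (one_le_div hQ).2 (hQq j)
      _ ≤ Real.exp ε * push p K j / Q := by gcongr; exact hpush j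
      _ = Real.exp ε / Q * push p K j := by ring

theorem fDiv_push_single (hKrow : ∀ i, ∑ j, K i j = 1) (f : ℝ → ℝ) (m : Fin n) :
    fDiv f (Pi.single m 1) (push (Pi.single m 1) K) = fDivDirac f (K m m) := by
  have hpush : push (Pi.single m 1) K = K m := by
    ext j
    simp [push, Pi.single_apply]
  have hoff : ∑ j ∈ univ.erase m, K m j = 1 - K m m := by
    rw [sum_erase_eq_sub (mem_univ m), hKrow m]
  rw [fDiv, hpush, ← add_sum_erase _ _ (mem_univ m),
    sum_congr rfl fun j hj => by rw [Pi.single_eq_of_ne (ne_of_mem_erase hj), zero_div],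
    ← sum_mul, hoff, fDivDirac, Pi.single_eq_same, one_div]
  ring

theorem diag_le_of_invariant (hq : ∀ i, 0 ≤ q i) (hq1 : ∑ i, q i = 1)
    (hLDP : ∀ i j k, K i k ≤ Real.exp ε * K j k) (hinv : ∀ j, ∑ i, q i * K i j = q j)
    (m : Fin n) :
    K m m * (Real.exp ε * q m + 1 - q m) ≤ Real.exp ε * q m := by
  have hoff : (1 - q m) * K m m ≤ Real.exp ε * ∑ i ∈ univ.erase m, q i * K i m := by
    calc (1 - q m) * K m m = ∑ i ∈ univ.erase m, q i * K m m := by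
          rw [← sum_mul, sum_erase_eq_sub (mem_univ m), hq1]
      _ ≤ ∑ i ∈ univ.erase m, q i * (Real.exp ε * K i m) :=
          sum_le_sum fun i _ => mul_le_mul_of_nonneg_left (hLDP m i m) (hq i)
      _ = _ := by simp only [mul_sum, mul_left_comm]
  have hsplit : q m * K m m + ∑ i ∈ univ.erase m, q i * K i m = q m := by
    rw [add_sum_erase _ (fun i => q i * K i m) (mem_univ m), hinv m]
  nlinarith [Real.exp_pos ε]

end Mechanism

theorem converse_lower_bound_general (n : ℕ) [NeZero n] (ε : ℝ)
    (f : ℝ → ℝ) (hconv : ConvexOn ℝ (Set.Ici (0:ℝ)) f)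
    (q : Fin n → ℝ) (hqpos : ∀ i, 0 < q i) (hqsum : ∑ i, q i = 1)
    (K : Matrix (Fin n) (Fin n) ℝ)
    (hKrow : ∀ i, ∑ j, K i j = 1)
    (hLDP : ∀ i j k, K i k ≤ Real.exp ε * K j k)
    (hinv : ∀ j, ∑ i, q i * K i j = q j) :
    (1 - Finset.univ.inf' Finset.univ_nonempty q) /
        (Real.exp ε * Finset.univ.inf' Finset.univ_nonempty q + 1 -
          Finset.univ.inf' Finset.univ_nonempty q) * f 0 +
      Real.exp ε * Finset.univ.inf' Finset.univ_nonempty q /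
        (Real.exp ε * Finset.univ.inf' Finset.univ_nonempty q + 1 -
          Finset.univ.inf' Finset.univ_nonempty q) *
        f ((Real.exp ε * Finset.univ.inf' Finset.univ_nonempty q + 1 -
            Finset.univ.inf' Finset.univ_nonempty q) /
          (Real.exp ε * Finset.univ.inf' Finset.univ_nonempty q)) ≤
    sSup {v : ℝ | ∃ p : Fin n → ℝ,
      (∀ i, 0 ≤ p i) ∧ ∑ i, p i = 1 ∧ v = fDiv f p (push p K)} := by
  obtain ⟨m, -, hm⟩ := exists_mem_eq_inf' univ_nonempty q
  have hqnn : ∀ i, 0 ≤ q i := fun i => (hqpos i).le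
  have hqm_le : q m ≤ 1 := hqsum ▸ single_le_sum (fun i _ => hqnn i) (mem_univ m)
  have hd : 0 < Real.exp ε * q m + 1 - q m := by
    linarith [mul_pos (Real.exp_pos ε) (hqpos m)]
  have hKmm : 0 < K m m := pos_of_mul_pos_right
    ((hqpos m).trans_le (le_exp_mul_of_invariant hqnn hqsum hLDP hinv m m)) (Real.exp_pos ε).le
  have hbdd := bddAbove_fDiv_push hqpos hqsum hKrow hLDP hinv hconv (hqpos m)
    fun i => hm ▸ inf'_le q (mem_univ i)
  rw [hm]
  calc _ = fDivDirac f (Real.exp ε * q m / (Real.exp ε * q m + 1 - q m)) := by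
        rw [fDivDirac, inv_div, one_sub_div hd.ne']
        ring_nf
    _ ≤ fDivDirac f (K m m) := antitoneOn_fDivDirac hconv hKmm
        (div_pos (mul_pos (Real.exp_pos ε) (hqpos m)) hd)
        ((le_div_iff₀ hd).2 (diag_le_of_invariant hqnn hqsum hLDP hinv m))
    _ = fDiv f (Pi.single m 1) (push (Pi.single m 1) K) := (fDiv_push_single hKrow f m).symm
    _ ≤ _ := le_csSup hbdd ⟨Pi.single m 1, fun i => by simp [Pi.single_apply, apply_ite],
        by simp, rfl⟩

/-- Converse (lower) bound: for any row-stochastic ε-LDP mechanism `K` keeping `q` invariant,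
the worst-case `f`-divergence `sup_p D_f(p ‖ pK)` is at least the claimed expression in
`q_min = min_x q(x)`. -/
theorem converse_lower_bound (n : ℕ) [NeZero n] (ε : ℝ) (hε : 0 ≤ ε)
    (f : ℝ → ℝ) (hconv : ConvexOn ℝ (Set.Ici (0:ℝ)) f) (hf1 : f 1 = 0)
    (q : Fin n → ℝ) (hqpos : ∀ i, 0 < q i) (hqsum : ∑ i, q i = 1)
    (K : Matrix (Fin n) (Fin n) ℝ)
    (hKnn : ∀ i j, 0 ≤ K i j) (hKrow : ∀ i, ∑ j, K i j = 1)
    (hLDP : ∀ i j k, K i k ≤ Real.exp ε * K j k)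
    (hinv : ∀ j, ∑ i, q i * K i j = q j) :
    (1 - Finset.univ.inf' Finset.univ_nonempty q) /
        (Real.exp ε * Finset.univ.inf' Finset.univ_nonempty q + 1 -
          Finset.univ.inf' Finset.univ_nonempty q) * f 0 +
      Real.exp ε * Finset.univ.inf' Finset.univ_nonempty q /
        (Real.exp ε * Finset.univ.inf' Finset.univ_nonempty q + 1 -
          Finset.univ.inf' Finset.univ_nonempty q) *
        f ((Real.exp ε * Finset.univ.inf' Finset.univ_nonempty q + 1 -
            Finset.univ.inf' Finset.univ_nonempty q) /
          (Real.exp ε * Finset.univ.inf' Finset.univ_nonempty q)) ≤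
    sSup {v : ℝ | ∃ p : Fin n → ℝ,
      (∀ i, 0 ≤ p i) ∧ ∑ i, p i = 1 ∧ v = fDiv f p (push p K)} :=
  converse_lower_bound_general n ε f hconv q hqpos hqsum K hKrow hLDP hinv
end

section
/- With q = (α, 1−α), 0 < α ≤ 1/2, and K the binary mechanism K = (1/(e^ε α + 1 − α)) · [[e^ε α, 1 − α], [α, (e^ε − 1)α + 1 − α]], we have min_i K_{ii} = K_{11} = e^ε α/(e^ε α + 1 − α), and hence sup_{p ∈ Δ({1,2})} D_f(p ‖ pK) = ((1 − α)/(e^ε α + 1 − α)) f(0) + (e^ε α/(e^ε α + 1 − α)) f((e^ε α + 1 − α)/(e^ε α)), matching the lower bound; i.e., K is minimax optimal among ε-LDP mechanisms fixing q. -/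
/-!
Write `r = pK` and let `a` be the smallest diagonal entry of the row-stochastic matrix `K`.
Then `r j ≥ p j * K j j ≥ a * p j`, so `p j / r j = t • a⁻¹ + (1 - t) • 0` with
`t = a * p j / r j ∈ [0, 1]`, and convexity along `[0, a⁻¹]` gives
`r j * f (p j / r j) ≤ a * p j * f a⁻¹ + (r j - a * p j) * f 0`. Summing over `j` bounds
`D_f(p ‖ pK)` by `a * f a⁻¹ + (1 - a) * f 0`, which the point mass on a row attaining `a` achieves.
For the binary mechanism `a = K 0 0`, since `K 1 1 - K 0 0 = (1 - 2α) / (e^ε α + 1 - α)`.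
-/

open Finset

open Matrix

lemma push_eq_vecMul {n : ℕ} (p : Fin n → ℝ) (K : Matrix (Fin n) (Fin n) ℝ) :
    push p K = p ᵥ* K := rfl

lemma ConvexOn.mul_apply_div_le {f : ℝ → ℝ} (hf : ConvexOn ℝ (Set.Ici 0) f) {a p r : ℝ}
    (ha : 0 < a) (hp : 0 ≤ p) (hpr : p * a ≤ r) :
    r * f (p / r) ≤ p * a * f a⁻¹ + (r - p * a) * f 0 := by
  rcases (mul_nonneg hp ha.le).trans hpr |>.eq_or_lt with hr | hr
  · have hp0 : p = 0 := by nlinarith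
    simp [← hr, hp0]
  set t := p * a / r
  have ht0 : 0 ≤ t := by positivity
  have ht1 : t ≤ 1 := (div_le_one hr).2 hpr
  have hpt : t • a⁻¹ + (1 - t) • (0 : ℝ) = p / r := by
    simp only [t, smul_eq_mul, mul_zero, add_zero]
    field_simp
  have hconv := hf.2 (Set.mem_Ici.2 (inv_nonneg.2 ha.le)) Set.self_mem_Ici ht0
    (sub_nonneg.2 ht1) (add_sub_cancel t 1)
  rw [hpt, smul_eq_mul, smul_eq_mul] at hconv
  calc r * f (p / r) ≤ r * (t * f a⁻¹ + (1 - t) * f 0) := mul_le_mul_of_nonneg_left hconv hr.le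
    _ = p * a * f a⁻¹ + (r - p * a) * f 0 := by simp only [t]; field_simp

section

variable {n : ℕ} {f : ℝ → ℝ} {K : Matrix (Fin n) (Fin n) ℝ}

lemma sum_push_of_mem_rowStochastic (hK : K ∈ rowStochastic ℝ (Fin n)) {p : Fin n → ℝ}
    (hp : ∑ i, p i = 1) : ∑ j, push p K j = 1 := by
  simpa [push_eq_vecMul, dotProduct_one] using
    vecMul_dotProduct_one_eq_one_rowStochastic hK (x := p) (by simpa [dotProduct_one] using hp)

lemma mul_diag_le_push (hK : K ∈ rowStochastic ℝ (Fin n)) {p : Fin n → ℝ} (hp : ∀ i, 0 ≤ p i)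
    (j : Fin n) : p j * K j j ≤ push p K j :=
  single_le_sum (f := fun i => p i * K i j) (fun i _ => mul_nonneg (hp i) (hK.1 i j)) (mem_univ j)

lemma fDiv_push_le (hf : ConvexOn ℝ (Set.Ici 0) f) (hK : K ∈ rowStochastic ℝ (Fin n)) {a : ℝ}
    (ha : 0 < a) (hdiag : ∀ i, a ≤ K i i) {p : Fin n → ℝ} (hp0 : ∀ i, 0 ≤ p i)
    (hp1 : ∑ i, p i = 1) :
    fDiv f p (push p K) ≤ a * f a⁻¹ + (1 - a) * f 0 := by
  have hterm (j : Fin n) :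
      push p K j * f (p j / push p K j) ≤ p j * a * f a⁻¹ + (push p K j - p j * a) * f 0 :=
    hf.mul_apply_div_le ha (hp0 j)
      ((mul_le_mul_of_nonneg_left (hdiag j) (hp0 j)).trans (mul_diag_le_push hK hp0 j))
  calc fDiv f p (push p K) ≤ ∑ j, (p j * a * f a⁻¹ + (push p K j - p j * a) * f 0) :=
        sum_le_sum fun j _ => hterm j
    _ = a * f a⁻¹ + (1 - a) * f 0 := by
        simp only [sum_add_distrib, ← sum_mul, sum_sub_distrib,
          sum_push_of_mem_rowStochastic hK hp1, hp1, one_mul]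

lemma fDiv_single_push_single (hK : K ∈ rowStochastic ℝ (Fin n)) (i : Fin n) :
    fDiv f (Pi.single i 1) (push (Pi.single i 1) K) = K i i * f (K i i)⁻¹ + (1 - K i i) * f 0 := by
  have hrow : K i i + ∑ j ∈ univ.erase i, K i j = 1 := by
    rw [add_sum_erase _ _ (mem_univ i)]; exact sum_row_of_mem_rowStochastic hK i
  rw [fDiv, push_eq_vecMul, single_vecMul, one_smul, ← add_sum_erase _ _ (mem_univ i)]
  rw [← eq_sub_iff_add_eq'] at hrow
  rw [← hrow, sum_mul]
  congr 1
  · simp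
  · refine sum_congr rfl fun j hj => ?_
    simp [Pi.single_eq_of_ne (ne_of_mem_erase hj)]

lemma isGreatest_fDiv_push (hf : ConvexOn ℝ (Set.Ici 0) f) (hK : K ∈ rowStochastic ℝ (Fin n))
    {i : Fin n} (hpos : 0 < K i i) (hmin : ∀ j, K i i ≤ K j j) :
    IsGreatest {v : ℝ | ∃ p : Fin n → ℝ, (∀ i, 0 ≤ p i) ∧ ∑ i, p i = 1 ∧ v = fDiv f p (push p K)}
      (K i i * f (K i i)⁻¹ + (1 - K i i) * f 0) :=
  ⟨⟨Pi.single i 1, fun j => by by_cases h : j = i <;> simp [h], by simp,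
      (fDiv_single_push_single hK i).symm⟩,
    by rintro v ⟨p, hp0, hp1, rfl⟩; exact fDiv_push_le hf hK hpos hmin hp0 hp1⟩

end

theorem binary_mechanism_optimal_general (ε α : ℝ) (hα : 0 < α) (hα2 : α ≤ 1 / 2)
    (f : ℝ → ℝ) (hconv : ConvexOn ℝ (Set.Ici (0:ℝ)) f)
    (K : Matrix (Fin 2) (Fin 2) ℝ)
    (hK : K = (1 / (Real.exp ε * α + 1 - α)) •
      !![Real.exp ε * α, 1 - α; α, (Real.exp ε - 1) * α + 1 - α]) :
    K 0 0 ≤ K 1 1 ∧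
    K 0 0 = Real.exp ε * α / (Real.exp ε * α + 1 - α) ∧
    IsGreatest
      {v : ℝ | ∃ p : Fin 2 → ℝ, (∀ i, 0 ≤ p i) ∧ ∑ i, p i = 1 ∧ v = fDiv f p (push p K)}
      ((1 - α) / (Real.exp ε * α + 1 - α) * f 0 +
        Real.exp ε * α / (Real.exp ε * α + 1 - α) *
          f ((Real.exp ε * α + 1 - α) / (Real.exp ε * α))) := by
  set E := Real.exp ε
  have hE : 0 < E := Real.exp_pos ε
  have hc : 0 < E * α + 1 - α := by nlinarith
  have hc0 := hc.ne'
  have hK00 : K 0 0 = E * α / (E * α + 1 - α) := by simp [hK, div_eq_inv_mul]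
  have hK01 : K 0 1 = (1 - α) / (E * α + 1 - α) := by simp [hK, div_eq_inv_mul]
  have hK10 : K 1 0 = α / (E * α + 1 - α) := by simp [hK, div_eq_inv_mul]
  have hK11 : K 1 1 = ((E - 1) * α + 1 - α) / (E * α + 1 - α) := by simp [hK, div_eq_inv_mul]
  have hstoch : K ∈ rowStochastic ℝ (Fin 2) := by
    refine mem_rowStochastic_iff_sum.2 ⟨?_, ?_⟩
    · simp only [Fin.forall_fin_two, hK00, hK01, hK10, hK11]
      refine ⟨⟨?_, ?_⟩, ?_, ?_⟩ <;> apply div_nonneg _ hc.le <;> nlinarith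
    · simp only [Fin.forall_fin_two, Fin.sum_univ_two, hK00, hK01, hK10, hK11]
      constructor <;> rw [← add_div, div_eq_one_iff_eq hc0] <;> ring
  have hdiag : K 0 0 ≤ K 1 1 := by
    rw [hK00, hK11]; gcongr; linarith
  have hmin : ∀ j, K 0 0 ≤ K j j := Fin.forall_fin_two.2 ⟨le_rfl, hdiag⟩
  have hpos : 0 < K 0 0 := by rw [hK00]; positivity
  refine ⟨hdiag, hK00, ?_⟩
  convert isGreatest_fDiv_push hconv hstoch hpos hmin using 1
  have hcompl : 1 - E * α / (E * α + 1 - α) = (1 - α) / (E * α + 1 - α) := by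
    field_simp; ring
  rw [hK00, inv_div, hcompl, add_comm]

/-- For the binary mechanism, the minimum diagonal entry is `K_11 = e^ε α/(e^ε α + 1 - α)`,
and the worst-case `f`-divergence equals the minimax lower bound, so `K` is optimal. -/
theorem binary_mechanism_optimal (ε α : ℝ) (hε : 0 ≤ ε) (hα : 0 < α) (hα2 : α ≤ 1 / 2)
    (f : ℝ → ℝ) (hconv : ConvexOn ℝ (Set.Ici (0:ℝ)) f) (hf1 : f 1 = 0)
    (K : Matrix (Fin 2) (Fin 2) ℝ)
    (hK : K = (1 / (Real.exp ε * α + 1 - α)) •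
      !![Real.exp ε * α, 1 - α; α, (Real.exp ε - 1) * α + 1 - α]) :
    K 0 0 ≤ K 1 1 ∧
    K 0 0 = Real.exp ε * α / (Real.exp ε * α + 1 - α) ∧
    IsGreatest
      {v : ℝ | ∃ p : Fin 2 → ℝ, (∀ i, 0 ≤ p i) ∧ ∑ i, p i = 1 ∧ v = fDiv f p (push p K)}
      ((1 - α) / (Real.exp ε * α + 1 - α) * f 0 +
        Real.exp ε * α / (Real.exp ε * α + 1 - α) *
          f ((Real.exp ε * α + 1 - α) / (Real.exp ε * α))) :=
  binary_mechanism_optimal_general ε α hα hα2 f hconv K hK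
end

section
/- For the total variation distance, the minimax optimal utility is Γ_TV(q, ε) = (1 − q_min)/(e^ε q_min + 1 − q_min), where Γ_TV(q, ε) = inf over ε-LDP row-stochastic K with qK = q of sup_{p ∈ Δ(X)} TV(p, pK), and q_min = min_x q(x) > 0. -/
open Finset

lemma tv_le_of_min {n : ℕ} [NeZero n] (p q : Fin n → ℝ) (hp : ∀ i, 0 ≤ p i)
    (hq : ∀ i, 0 ≤ q i) (hps : ∑ i, p i = 1) (hqs : ∑ i, q i = 1)
    (m : ℝ) (hm : ∀ i, m ≤ q i) : tv p q ≤ 1 - m := by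
  obtain ⟨j0, hj0⟩ : ∃ j, q j ≤ p j := by
    by_contra h
    push_neg at h
    have := Finset.sum_lt_sum_of_nonempty Finset.univ_nonempty (fun i _ => h i)
    rw [hps, hqs] at this; exact lt_irrefl _ this
  have key : ∑ x, |p x - q x| = 2 - 2 * ∑ x, min (p x) (q x) := by
    have h : ∀ x, |p x - q x| = p x + q x - 2 * min (p x) (q x) := by
      intro x; rcases le_total (p x) (q x) with h | h
      · rw [abs_of_nonpos (by linarith), min_eq_left h]; ring
      · rw [abs_of_nonneg (by linarith), min_eq_right h]; ring
    simp only [h]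
    rw [Finset.sum_sub_distrib, Finset.sum_add_distrib, hps, hqs, ← Finset.mul_sum]
    ring
  have hmin : m ≤ ∑ x, min (p x) (q x) :=
    calc m ≤ q j0 := hm j0
    _ = min (p j0) (q j0) := (min_eq_right hj0).symm
    _ ≤ ∑ x, min (p x) (q x) :=
        Finset.single_le_sum (fun i _ => le_min (hp i) (hq i)) (Finset.mem_univ j0)
  unfold tv; rw [key]; linarith

lemma tv_delta {n : ℕ} (i0 : Fin n) (r : Fin n → ℝ) (hr : ∀ j, 0 ≤ r j)
    (hrs : ∑ j, r j = 1) :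
    tv (fun j => if j = i0 then 1 else 0) r = 1 - r i0 := by
  have h1 : r i0 ≤ 1 := by
    rw [← hrs]; exact Finset.single_le_sum (fun i _ => hr i) (Finset.mem_univ i0)
  unfold tv
  rw [← Finset.add_sum_erase _ _ (Finset.mem_univ i0)]
  have h2 : ∑ x ∈ Finset.univ.erase i0, |(if x = i0 then (1:ℝ) else 0) - r x|
      = ∑ x ∈ Finset.univ.erase i0, r x := by
    apply Finset.sum_congr rfl
    intro x hx
    rw [if_neg (Finset.mem_erase.mp hx).1, abs_of_nonpos (by linarith [hr x])]; ring
  rw [h2, Finset.sum_erase_eq_sub (Finset.mem_univ i0), hrs]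
  simp only [eq_self_iff_true, if_true]
  rw [abs_of_nonneg (by linarith)]
  ring

/-- The minimax optimal utility for total variation:
`Γ_TV(q, ε) = (1 - q_min)/(e^ε q_min + 1 - q_min)`. -/
theorem minimax_tv (n : ℕ) [NeZero n] (ε : ℝ) (hε : 0 ≤ ε)
    (q : Fin n → ℝ) (hqpos : ∀ i, 0 < q i) (hqsum : ∑ i, q i = 1) :
    sInf {v : ℝ | ∃ K : Matrix (Fin n) (Fin n) ℝ,
        (∀ i j, 0 ≤ K i j) ∧ (∀ i, ∑ j, K i j = 1) ∧
        (∀ i j k, K i k ≤ Real.exp ε * K j k) ∧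
        (∀ j, ∑ i, q i * K i j = q j) ∧
        v = sSup {u : ℝ | ∃ p : Fin n → ℝ,
          (∀ i, 0 ≤ p i) ∧ ∑ i, p i = 1 ∧ u = tv p (push p K)}} =
      (1 - Finset.univ.inf' Finset.univ_nonempty q) /
        (Real.exp ε * Finset.univ.inf' Finset.univ_nonempty q + 1 -
          Finset.univ.inf' Finset.univ_nonempty q) := by
  have hq0 : ∀ i, 0 ≤ q i := fun i => (hqpos i).le
  obtain ⟨i0, -, hi0⟩ := Finset.exists_mem_eq_inf' (Finset.univ_nonempty (α := Fin n)) q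
  set m := Finset.univ.inf' Finset.univ_nonempty q with hmdef
  have hmle : ∀ i, m ≤ q i := fun i => Finset.inf'_le q (Finset.mem_univ i)
  have hmpos : 0 < m := by rw [hi0]; exact hqpos i0
  have hm1 : m ≤ 1 := by
    rw [hi0, ← hqsum]
    exact Finset.single_le_sum (fun i _ => hq0 i) (Finset.mem_univ i0)
  have hE1 : 1 ≤ Real.exp ε := Real.one_le_exp hε
  have hEpos : 0 < Real.exp ε := Real.exp_pos ε
  set D := Real.exp ε * m + 1 - m with hDdef
  have hD1 : 1 ≤ D := by nlinarith
  have hDpos : 0 < D := by linarith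
  set lam := 1 / D with hlamdef
  have hlampos : 0 < lam := by positivity
  have hlam1 : lam ≤ 1 := by rw [hlamdef, div_le_one hDpos]; exact hD1
  have hlamD' : lam * (Real.exp ε * m + 1 - m) = 1 := by
    rw [← hDdef, hlamdef]; field_simp
  have hexp : 1 - lam = lam * m * (Real.exp ε - 1) := by linear_combination -hlamD'
  -- delta distribution facts
  have hdelta0 : ∀ (i j : Fin n), (0:ℝ) ≤ if j = i then 1 else 0 := by
    intro i j; split <;> norm_num
  have hdeltasum : ∀ (i : Fin n), ∑ j, (if j = i then (1:ℝ) else 0) = 1 := by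
    intro i
    rw [Finset.sum_ite_eq' Finset.univ i (fun _ => (1:ℝ))]
    simp
  refine IsLeast.csInf_eq ⟨?_, ?_⟩
  · -- membership: the optimal mechanism K = (1-lam) I + lam 1 qᵀ
    set K : Matrix (Fin n) (Fin n) ℝ :=
      Matrix.of (fun i j => (1 - lam) * (if i = j then 1 else 0) + lam * q j) with hK
    have hKapp : ∀ i j, K i j = (1 - lam) * (if i = j then 1 else 0) + lam * q j :=
      fun i j => rfl
    have hK0 : ∀ i j, 0 ≤ K i j := by
      intro i j; rw [hKapp]
      have h : (0:ℝ) ≤ if i = j then 1 else 0 := by split <;> norm_num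
      nlinarith [hq0 j]
    have hrow : ∀ i, ∑ j, K i j = 1 := by
      intro i
      simp only [hKapp]
      rw [Finset.sum_add_distrib, ← Finset.mul_sum, ← Finset.mul_sum, hqsum,
        Finset.sum_ite_eq Finset.univ i (fun _ => (1:ℝ))]
      simp
    have hldp : ∀ i j k, K i k ≤ Real.exp ε * K j k := by
      intro i j k
      have hik : (if i = k then (1:ℝ) else 0) ≤ 1 := by split <;> norm_num
      have hjk : (0:ℝ) ≤ if j = k then 1 else 0 := by split <;> norm_num
      have h1 : K i k ≤ (1 - lam) + lam * q k := by
        rw [hKapp]; nlinarith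
      have h2 : lam * q k ≤ K j k := by
        rw [hKapp]; nlinarith
      have h3 : (1 - lam) + lam * q k ≤ Real.exp ε * (lam * q k) := by
        nlinarith [mul_nonneg (mul_nonneg hlampos.le (sub_nonneg.mpr hE1))
          (sub_nonneg.mpr (hmle k)), hexp]
      calc K i k ≤ (1 - lam) + lam * q k := h1
        _ ≤ Real.exp ε * (lam * q k) := h3
        _ ≤ Real.exp ε * K j k := by nlinarith
    have hstat : ∀ j, ∑ i, q i * K i j = q j := by
      intro j
      simp only [hKapp]
      have h1 : ∑ i, q i * ((1 - lam) * (if i = j then 1 else 0) + lam * q j)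
          = (1 - lam) * (∑ i, q i * (if i = j then 1 else 0)) + lam * q j * ∑ i, q i := by
        rw [Finset.mul_sum, Finset.mul_sum, ← Finset.sum_add_distrib]
        apply Finset.sum_congr rfl; intro i _; ring
      have h2 : ∑ i, q i * (if i = j then (1:ℝ) else 0) = q j := by
        rw [Finset.sum_congr rfl (fun i _ => by rw [mul_ite, mul_one, mul_zero]),
          Finset.sum_ite_eq' Finset.univ j q]
        simp
      rw [h1, h2, hqsum]; ring
    have hpush : ∀ (p : Fin n → ℝ), (∑ i, p i = 1) →
        ∀ j, push p K j = (1 - lam) * p j + lam * q j := by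
      intro p hps j
      unfold push
      simp only [hKapp]
      have h1 : ∑ i, p i * ((1 - lam) * (if i = j then 1 else 0) + lam * q j)
          = (1 - lam) * (∑ i, p i * (if i = j then 1 else 0)) + lam * q j * ∑ i, p i := by
        rw [Finset.mul_sum, Finset.mul_sum, ← Finset.sum_add_distrib]
        apply Finset.sum_congr rfl; intro i _; ring
      have h2 : ∑ i, p i * (if i = j then (1:ℝ) else 0) = p j := by
        rw [Finset.sum_congr rfl (fun i _ => by rw [mul_ite, mul_one, mul_zero]),
          Finset.sum_ite_eq' Finset.univ j p]
        simp
      rw [h1, h2, hps]; ring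
    have htvK : ∀ (p : Fin n → ℝ), (∑ i, p i = 1) →
        tv p (push p K) = lam * tv p q := by
      intro p hps
      unfold tv
      have h : ∀ x, |p x - push p K x| = lam * |p x - q x| := by
        intro x
        rw [hpush p hps x,
          show p x - ((1 - lam) * p x + lam * q x) = lam * (p x - q x) by ring,
          abs_mul, abs_of_nonneg hlampos.le]
      simp only [h]
      rw [← Finset.mul_sum]; ring
    have hub : ∀ u ∈ {u : ℝ | ∃ p : Fin n → ℝ,
        (∀ i, 0 ≤ p i) ∧ ∑ i, p i = 1 ∧ u = tv p (push p K)}, u ≤ (1 - m) / D := by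
      rintro u ⟨p, hp0, hps, rfl⟩
      rw [htvK p hps]
      have h := tv_le_of_min p q hp0 hq0 hps hqsum m hmle
      calc lam * tv p q ≤ lam * (1 - m) :=
            mul_le_mul_of_nonneg_left h hlampos.le
        _ = (1 - m) / D := by rw [hlamdef]; ring
    have hmem : (1 - m) / D ∈ {u : ℝ | ∃ p : Fin n → ℝ,
        (∀ i, 0 ≤ p i) ∧ ∑ i, p i = 1 ∧ u = tv p (push p K)} := by
      refine ⟨fun j => if j = i0 then 1 else 0, hdelta0 i0, hdeltasum i0, ?_⟩
      rw [htvK _ (hdeltasum i0), tv_delta i0 q hq0 hqsum, ← hi0, hlamdef]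
      ring
    have hsup : sSup {u : ℝ | ∃ p : Fin n → ℝ,
        (∀ i, 0 ≤ p i) ∧ ∑ i, p i = 1 ∧ u = tv p (push p K)} = (1 - m) / D :=
      le_antisymm (csSup_le ⟨_, hmem⟩ hub) (le_csSup ⟨_, hub⟩ hmem)
    exact ⟨K, hK0, hrow, hldp, hstat, hsup.symm⟩
  · -- lower bound
    rintro v ⟨K, hK0, hrow, hldp, hstat, rfl⟩
    have hpush0 : ∀ (p : Fin n → ℝ), (∀ i, 0 ≤ p i) → ∀ j, 0 ≤ push p K j :=
      fun p hp j => Finset.sum_nonneg fun i _ => mul_nonneg (hp i) (hK0 i j)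
    have hpushsum : ∀ (p : Fin n → ℝ), (∑ i, p i = 1) → ∑ j, push p K j = 1 := by
      intro p hps
      unfold push
      rw [Finset.sum_comm]
      calc ∑ i, ∑ j, p i * K i j = ∑ i, p i * ∑ j, K i j := by
            apply Finset.sum_congr rfl; intro i _; rw [Finset.mul_sum]
        _ = 1 := by simp only [hrow, mul_one]; exact hps
    have hub1 : ∀ u ∈ {u : ℝ | ∃ p : Fin n → ℝ,
        (∀ i, 0 ≤ p i) ∧ ∑ i, p i = 1 ∧ u = tv p (push p K)}, u ≤ 1 := by
      rintro u ⟨p, hp0, hps, rfl⟩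
      have h := tv_le_of_min p (push p K) hp0 (hpush0 p hp0) hps (hpushsum p hps)
        0 (fun i => hpush0 p hp0 i)
      linarith
    have hrowK : push (fun j => if j = i0 then 1 else 0) K = fun j => K i0 j := by
      funext j
      unfold push
      have h : ∀ i, (if i = i0 then (1:ℝ) else 0) * K i j = if i = i0 then K i j else 0 := by
        intro i; split <;> simp
      rw [Finset.sum_congr rfl (fun i _ => h i),
        Finset.sum_ite_eq' Finset.univ i0 (fun i => K i j)]
      simp
    have hdmem : (1 - K i0 i0) ∈ {u : ℝ | ∃ p : Fin n → ℝ,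
        (∀ i, 0 ≤ p i) ∧ ∑ i, p i = 1 ∧ u = tv p (push p K)} := by
      refine ⟨fun j => if j = i0 then 1 else 0, hdelta0 i0, hdeltasum i0, ?_⟩
      rw [hrowK, tv_delta i0 (fun j => K i0 j) (fun j => hK0 i0 j) (hrow i0)]
    have hKle : K i0 i0 * D ≤ Real.exp ε * m := by
      have hsum : ∑ i, q i * K i i0 = q i0 := hstat i0
      have hsplit : q i0 * K i0 i0 + ∑ i ∈ Finset.univ.erase i0, q i * K i i0 = q i0 := by
        rw [Finset.add_sum_erase _ (fun i => q i * K i i0) (Finset.mem_univ i0)]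
        exact hsum
      have herase_q : ∑ i ∈ Finset.univ.erase i0, q i = 1 - q i0 := by
        rw [Finset.sum_erase_eq_sub (Finset.mem_univ i0), hqsum]
      have hterm : ∀ i, q i * K i0 i0 ≤ Real.exp ε * (q i * K i i0) := by
        intro i
        have h := hldp i0 i i0
        nlinarith [hq0 i]
      have hsum2 : ∑ i ∈ Finset.univ.erase i0, q i * K i0 i0
          ≤ Real.exp ε * ∑ i ∈ Finset.univ.erase i0, q i * K i i0 := by
        rw [Finset.mul_sum]
        exact Finset.sum_le_sum (fun i _ => hterm i)
      rw [← Finset.sum_mul, herase_q] at hsum2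
      have hser : ∑ i ∈ Finset.univ.erase i0, q i * K i i0
          = q i0 - q i0 * K i0 i0 := by linarith
      rw [hser, ← hi0] at hsum2
      rw [hDdef]
      nlinarith [hsum2]
    have hVle : (1 - m) / D ≤ 1 - K i0 i0 := by
      rw [div_le_iff₀ hDpos]
      have h : (1 - K i0 i0) * D = D - K i0 i0 * D := by ring
      rw [h]
      have hDv : D = Real.exp ε * m + 1 - m := hDdef
      linarith [hKle]
    calc (1 - m) / D ≤ 1 - K i0 i0 := hVle
      _ ≤ sSup {u : ℝ | ∃ p : Fin n → ℝ,
          (∀ i, 0 ≤ p i) ∧ ∑ i, p i = 1 ∧ u = tv p (push p K)} :=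
        le_csSup ⟨1, hub1⟩ hdmem
end

section
/- For the uniform distribution q_u on n points, Γ_TV(q_u, ε) = (n − 1)/(e^ε + n − 1), attained by the n-ary randomized response mechanism. -/
open Finset

lemma myRR_sum_ite (n : ℕ) (i : Fin n) (a b : ℝ) :
    ∑ j : Fin n, (if i = j then a else b) = a + ((n:ℝ) - 1) * b := by
  have h : ∀ j : Fin n, (if i = j then a else b) = (if i = j then a - b else 0) + b := by
    intro j; split <;> ring
  simp only [h, Finset.sum_add_distrib, Finset.sum_ite_eq, Finset.mem_univ, if_true,
    Finset.sum_const, Finset.card_univ, Fintype.card_fin, nsmul_eq_mul]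
  ring

lemma myRR_sum_ite' (n : ℕ) (j : Fin n) (a b : ℝ) :
    ∑ i : Fin n, (if i = j then a else b) = a + ((n:ℝ) - 1) * b := by
  have h : ∀ i : Fin n, (if i = j then a else b) = (if i = j then a - b else 0) + b := by
    intro i; split <;> ring
  simp only [h, Finset.sum_add_distrib, Finset.sum_ite_eq', Finset.mem_univ, if_true,
    Finset.sum_const, Finset.card_univ, Fintype.card_fin, nsmul_eq_mul]
  ring

section main
variable (n : ℕ) (ε : ℝ)

-- basic facts
lemma myRR_hn2 (hn : 2 ≤ n) : (2:ℝ) ≤ (n:ℝ) := by exact_mod_cast hn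
lemma myRR_hE (hε : 0 ≤ ε) : 1 ≤ Real.exp ε := Real.one_le_exp hε
lemma myRR_hD (hn : 2 ≤ n) (hε : 0 ≤ ε) : 0 < Real.exp ε + (n:ℝ) - 1 := by
  have := myRR_hn2 n hn; have := myRR_hE ε hε; linarith

-- push under RR
lemma myRR_push (hn : 2 ≤ n) (hε : 0 ≤ ε) (p : Fin n → ℝ) (hp1 : ∑ i, p i = 1) (j : Fin n) :
    push p (fun i j => if i = j then Real.exp ε / (Real.exp ε + n - 1)
      else 1 / (Real.exp ε + n - 1)) j
      = (p j * (Real.exp ε - 1) + 1) / (Real.exp ε + n - 1) := by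
  have hD := myRR_hD n ε hn hε
  unfold push
  have h : ∀ i : Fin n, p i * (if i = j then Real.exp ε / (Real.exp ε + n - 1)
      else 1 / (Real.exp ε + n - 1))
      = (if i = j then p i * (Real.exp ε - 1) / (Real.exp ε + n - 1) else 0)
        + p i * (1 / (Real.exp ε + n - 1)) := by
    intro i; split
    · field_simp; try ring
    · rw [zero_add]
  rw [Finset.sum_congr rfl (fun i _ => h i), Finset.sum_add_distrib,
    Finset.sum_ite_eq' Finset.univ j, ← Finset.sum_mul, hp1]
  simp only [Finset.mem_univ, if_true]
  field_simp
  try ring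

-- the sSup set for a general K
def mySet (K : Matrix (Fin n) (Fin n) ℝ) : Set ℝ :=
  {u : ℝ | ∃ p : Fin n → ℝ, (∀ i, 0 ≤ p i) ∧ ∑ i, p i = 1 ∧ u = tv p (push p K)}

lemma myRR_bdd (K : Matrix (Fin n) (Fin n) ℝ) (hK0 : ∀ i j, 0 ≤ K i j)
    (hK1 : ∀ i, ∑ j, K i j = 1) : ∀ u ∈ mySet n K, u ≤ 1 := by
  rintro u ⟨p, hp0, hp1, rfl⟩
  have hpush0 : ∀ j, 0 ≤ push p K j := fun j =>
    Finset.sum_nonneg fun i _ => mul_nonneg (hp0 i) (hK0 i j)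
  have hpushsum : ∑ j, push p K j = 1 := by
    unfold push
    rw [Finset.sum_comm]
    calc ∑ i, ∑ j, p i * K i j = ∑ i, p i * ∑ j, K i j := by
          simp [Finset.mul_sum]
      _ = 1 := by simp only [hK1, mul_one]; exact hp1
  unfold tv
  have : ∑ x, |p x - push p K x| ≤ ∑ x, (p x + push p K x) := by
    apply Finset.sum_le_sum
    intro x _
    calc |p x - push p K x| ≤ |p x| + |push p K x| := abs_sub _ _
      _ = p x + push p K x := by rw [abs_of_nonneg (hp0 x), abs_of_nonneg (hpush0 x)]
  have h2 : ∑ x, (p x + push p K x) = 2 := by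
    rw [Finset.sum_add_distrib, hp1, hpushsum]; norm_num
  linarith

-- point mass
lemma myRR_delta_mem (K : Matrix (Fin n) (Fin n) ℝ) (hK0 : ∀ i j, 0 ≤ K i j)
    (hK1 : ∀ i, ∑ j, K i j = 1) (i0 : Fin n) :
    (1 - K i0 i0) ∈ mySet n K := by
  refine ⟨fun i => if i = i0 then 1 else 0, fun i => by positivity, by simp, ?_⟩
  have hpush : ∀ j, push (fun i => if i = i0 then 1 else 0) K j = K i0 j := by
    intro j; unfold push
    simp [ite_mul, Finset.sum_ite_eq']
  have hKle : K i0 i0 ≤ 1 := by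
    rw [← hK1 i0]
    exact Finset.single_le_sum (fun j _ => hK0 i0 j) (Finset.mem_univ i0)
  unfold tv
  have hsplit : ∑ x, |(if x = i0 then (1:ℝ) else 0) - push (fun i => if i = i0 then 1 else 0) K x|
      = |1 - K i0 i0| + ∑ x ∈ Finset.univ.erase i0, |0 - K i0 x| := by
    rw [← Finset.add_sum_erase _ _ (Finset.mem_univ i0)]
    congr 1
    · simp [hpush]
    · apply Finset.sum_congr rfl
      intro x hx
      rw [hpush]
      simp [Finset.mem_erase.mp hx |>.1]
  rw [hsplit]
  have h1 : |1 - K i0 i0| = 1 - K i0 i0 := abs_of_nonneg (by linarith)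
  have h2 : ∑ x ∈ Finset.univ.erase i0, |0 - K i0 x| = 1 - K i0 i0 := by
    have : ∀ x ∈ Finset.univ.erase i0, |0 - K i0 x| = K i0 x := by
      intro x _; rw [zero_sub, abs_neg, abs_of_nonneg (hK0 i0 x)]
    rw [Finset.sum_congr rfl this]
    have := hK1 i0
    rw [← Finset.add_sum_erase _ _ (Finset.mem_univ i0)] at this
    linarith
  rw [h1, h2]; ring

end main

section main2
variable (n : ℕ) (ε : ℝ)

lemma myRR_tv_le (hn : 2 ≤ n) (hε : 0 ≤ ε) (p : Fin n → ℝ)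
    (hp0 : ∀ i, 0 ≤ p i) (hp1 : ∑ i, p i = 1) :
    tv p (push p (fun i j => if i = j then Real.exp ε / (Real.exp ε + n - 1)
      else 1 / (Real.exp ε + n - 1))) ≤ ((n:ℝ) - 1) / (Real.exp ε + n - 1) := by
  have hD := myRR_hD n ε hn hε
  have hn2 := myRR_hn2 n hn
  have hple : ∀ i, p i ≤ 1 := by
    intro i
    rw [← hp1]
    exact Finset.single_le_sum (fun j _ => hp0 j) (Finset.mem_univ i)
  have hdiff : ∀ j, p j - push p (fun i j => if i = j then Real.exp ε / (Real.exp ε + n - 1)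
      else 1 / (Real.exp ε + n - 1)) j = ((n:ℝ) * p j - 1) / (Real.exp ε + n - 1) := by
    intro j
    rw [myRR_push n ε hn hε p hp1 j]
    field_simp
    ring
  have habs : ∀ j, |p j - push p (fun i j => if i = j then Real.exp ε / (Real.exp ε + n - 1)
      else 1 / (Real.exp ε + n - 1)) j| ≤ (((n:ℝ) - 2) * p j + 1) / (Real.exp ε + n - 1) := by
    intro j
    rw [hdiff j, abs_div, abs_of_pos hD, div_le_div_iff_of_pos_right hD]
    rw [abs_le]
    constructor
    · nlinarith [hp0 j]
    · nlinarith [hple j]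
  unfold tv
  have hsum : ∑ x, |p x - push p (fun i j => if i = j then Real.exp ε / (Real.exp ε + n - 1)
      else 1 / (Real.exp ε + n - 1)) x| ≤ (2 * (n:ℝ) - 2) / (Real.exp ε + n - 1) := by
    calc _ ≤ ∑ x, (((n:ℝ) - 2) * p x + 1) / (Real.exp ε + n - 1) :=
          Finset.sum_le_sum (fun x _ => habs x)
      _ = (2 * (n:ℝ) - 2) / (Real.exp ε + n - 1) := by
          rw [← Finset.sum_div, Finset.sum_add_distrib, ← Finset.mul_sum, hp1]
          simp
          field_simp
          ring
  have hkey : (2 * (n:ℝ) - 2) / (Real.exp ε + n - 1)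
      = 2 * (((n:ℝ) - 1) / (Real.exp ε + n - 1)) := by ring
  linarith

end main2

/-- For the uniform prior, `Γ_TV(q_u, ε) = (n-1)/(e^ε + n - 1)`, attained by the
`n`-ary randomized response mechanism. -/
theorem randomized_response_tv (n : ℕ) (hn : 2 ≤ n) (ε : ℝ) (hε : 0 ≤ ε)
    (KRR : Matrix (Fin n) (Fin n) ℝ)
    (hKRR : KRR = fun i j => if i = j then Real.exp ε / (Real.exp ε + n - 1)
      else 1 / (Real.exp ε + n - 1)) :
    (∀ i j, 0 ≤ KRR i j) ∧ (∀ i, ∑ j, KRR i j = 1) ∧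
    (∀ i j k, KRR i k ≤ Real.exp ε * KRR j k) ∧
    (∀ j, ∑ i, (1 / (n:ℝ)) * KRR i j = 1 / (n:ℝ)) ∧
    sSup {u : ℝ | ∃ p : Fin n → ℝ,
        (∀ i, 0 ≤ p i) ∧ ∑ i, p i = 1 ∧ u = tv p (push p KRR)} =
      ((n:ℝ) - 1) / (Real.exp ε + n - 1) ∧
    sInf {v : ℝ | ∃ K : Matrix (Fin n) (Fin n) ℝ,
        (∀ i j, 0 ≤ K i j) ∧ (∀ i, ∑ j, K i j = 1) ∧
        (∀ i j k, K i k ≤ Real.exp ε * K j k) ∧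
        (∀ j, ∑ i, (1 / (n:ℝ)) * K i j = 1 / (n:ℝ)) ∧
        v = sSup {u : ℝ | ∃ p : Fin n → ℝ,
          (∀ i, 0 ≤ p i) ∧ ∑ i, p i = 1 ∧ u = tv p (push p K)}} =
      ((n:ℝ) - 1) / (Real.exp ε + n - 1) := by
  have hD := myRR_hD n ε hn hε
  have hEone := myRR_hE ε hε
  have hEpos := Real.exp_pos ε
  have hn2 := myRR_hn2 n hn
  have i0 : Fin n := ⟨0, by omega⟩
  -- part 1
  have h0 : ∀ i j, 0 ≤ KRR i j := by
    intro i j; rw [hKRR]; dsimp only; split <;> positivity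
  -- part 2
  have h2 : ∀ i, ∑ j, KRR i j = 1 := by
    intro i; rw [hKRR]; dsimp only
    rw [myRR_sum_ite n i]
    field_simp
    ring
  -- part 3
  have h3 : ∀ i j k, KRR i k ≤ Real.exp ε * KRR j k := by
    intro i j k; rw [hKRR]; dsimp only
    split_ifs <;>
      rw [← mul_div_assoc, div_le_div_iff_of_pos_right hD] <;> nlinarith
  -- part 4
  have h4 : ∀ j, ∑ i, (1 / (n:ℝ)) * KRR i j = 1 / (n:ℝ) := by
    intro j; rw [hKRR]; dsimp only
    rw [← Finset.mul_sum, myRR_sum_ite' n j]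
    have : Real.exp ε / (Real.exp ε + ↑n - 1) + ((n:ℝ) - 1) * (1 / (Real.exp ε + ↑n - 1)) = 1 := by
      field_simp; ring
    rw [this, mul_one]
  -- sup membership
  have hmem : ((n:ℝ) - 1) / (Real.exp ε + n - 1) ∈ mySet n KRR := by
    have h := myRR_delta_mem n KRR h0 h2 i0
    have heq : (1 : ℝ) - KRR i0 i0 = ((n:ℝ) - 1) / (Real.exp ε + n - 1) := by
      rw [hKRR]; dsimp only
      rw [if_pos rfl]
      field_simp
      ring
    rwa [heq] at h
  have hbdd : BddAbove (mySet n KRR) := ⟨1, fun u hu => myRR_bdd n KRR h0 h2 u hu⟩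
  -- part 5
  have h5 : sSup (mySet n KRR) = ((n:ℝ) - 1) / (Real.exp ε + n - 1) := by
    apply le_antisymm
    · apply csSup_le ⟨_, hmem⟩
      rintro u ⟨p, hp0, hp1, rfl⟩
      rw [hKRR]
      exact myRR_tv_le n ε hn hε p hp0 hp1
    · exact le_csSup hbdd hmem
  refine ⟨h0, h2, h3, h4, h5, ?_⟩
  -- part 6
  have hlow : ∀ v ∈ {v : ℝ | ∃ K : Matrix (Fin n) (Fin n) ℝ,
      (∀ i j, 0 ≤ K i j) ∧ (∀ i, ∑ j, K i j = 1) ∧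
      (∀ i j k, K i k ≤ Real.exp ε * K j k) ∧
      (∀ j, ∑ i, (1 / (n:ℝ)) * K i j = 1 / (n:ℝ)) ∧
      v = sSup {u : ℝ | ∃ p : Fin n → ℝ,
        (∀ i, 0 ≤ p i) ∧ ∑ i, p i = 1 ∧ u = tv p (push p K)}},
      ((n:ℝ) - 1) / (Real.exp ε + n - 1) ≤ v := by
    rintro v ⟨K, hK0, hK1, hK3, hK4, rfl⟩
    have hcol : ∑ i, K i i0 = 1 := by
      have h := hK4 i0
      rw [← Finset.mul_sum] at h
      have hne : (1 / (n:ℝ)) ≠ 0 := by positivity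
      field_simp at h
      exact h
    have hge : ∀ i, K i0 i0 / Real.exp ε ≤ K i i0 := by
      intro i
      rw [div_le_iff₀ hEpos]
      have := hK3 i0 i i0
      linarith
    have hcard : ((Finset.univ.erase i0).card : ℝ) = (n : ℝ) - 1 := by
      rw [Finset.card_erase_of_mem (Finset.mem_univ i0), Finset.card_univ, Fintype.card_fin]
      push_cast [Nat.cast_sub (by omega : 1 ≤ n)]
      ring
    have hsplit : ∑ i ∈ Finset.univ.erase i0, K i i0 + K i0 i0 = 1 := by
      rw [Finset.sum_erase_add _ _ (Finset.mem_univ i0)]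
      exact hcol
    have herase : ((n:ℝ) - 1) * (K i0 i0 / Real.exp ε) ≤ ∑ i ∈ Finset.univ.erase i0, K i i0 := by
      calc ((n:ℝ) - 1) * (K i0 i0 / Real.exp ε)
          = ∑ _i ∈ Finset.univ.erase i0, K i0 i0 / Real.exp ε := by
            rw [Finset.sum_const, nsmul_eq_mul, hcard]
        _ ≤ _ := Finset.sum_le_sum (fun i _ => hge i)
    have hfrac : ((n:ℝ) - 1) * (K i0 i0 / Real.exp ε) * Real.exp ε
        = ((n:ℝ) - 1) * K i0 i0 := by field_simp
    have hKle : K i0 i0 * (Real.exp ε + n - 1) ≤ Real.exp ε := by nlinarith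
    have hK00 : K i0 i0 ≤ Real.exp ε / (Real.exp ε + n - 1) := (le_div_iff₀ hD).mpr hKle
    have helem := myRR_delta_mem n K hK0 hK1 i0
    have hle1 : 1 - K i0 i0 ≤ sSup (mySet n K) :=
      le_csSup ⟨1, fun u hu => myRR_bdd n K hK0 hK1 u hu⟩ helem
    have hval : ((n:ℝ) - 1) / (Real.exp ε + n - 1) ≤ 1 - K i0 i0 := by
      have heq : ((n:ℝ) - 1) / (Real.exp ε + n - 1)
          = 1 - Real.exp ε / (Real.exp ε + n - 1) := by field_simp; ring
      linarith
    calc ((n:ℝ) - 1) / (Real.exp ε + n - 1) ≤ 1 - K i0 i0 := hval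
      _ ≤ _ := hle1
  have hVmem : ((n:ℝ) - 1) / (Real.exp ε + n - 1) ∈ {v : ℝ | ∃ K : Matrix (Fin n) (Fin n) ℝ,
      (∀ i j, 0 ≤ K i j) ∧ (∀ i, ∑ j, K i j = 1) ∧
      (∀ i j k, K i k ≤ Real.exp ε * K j k) ∧
      (∀ j, ∑ i, (1 / (n:ℝ)) * K i j = 1 / (n:ℝ)) ∧
      v = sSup {u : ℝ | ∃ p : Fin n → ℝ,
        (∀ i, 0 ≤ p i) ∧ ∑ i, p i = 1 ∧ u = tv p (push p K)}} :=
    ⟨KRR, h0, h2, h3, h4, h5.symm⟩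
  exact le_antisymm (csInf_le ⟨_, fun v hv => hlow v hv⟩ hVmem) (le_csInf ⟨_, hVmem⟩ hlow)
end

section
/- With K as in the recursive construction (first row/column as specified, lower-right block m·M), if additionally M satisfies q̄ M = q̄ where q̄ = (q_2,…,q_n)/(1 − q_1), then qK = q, i.e., Σ_i q_i K_{ij} = q_j for every j. -/
open Finset

lemma Real.exp_mul_add_one_sub_pos (ε : ℝ) {p : ℝ} (hp : 0 < p) (hp1 : p ≤ 1) :
    0 < Real.exp ε * p + 1 - p := by
  nlinarith [mul_pos (Real.exp_pos ε) hp]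

lemma Finset.sum_mul_eq_of_sum_div_mul_eq {R ι : Type*} [Field R] (s : Finset ι)
    {w v : ι → R} {x c : R} (hc : c ≠ 0) (h : ∑ i ∈ s, w i / c * v i = x / c) :
    ∑ i ∈ s, w i * v i = x := by
  simp only [div_mul_eq_mul_div, ← sum_div] at h
  exact (div_left_inj' hc).mp h

theorem recursive_K_invariant_general (n : ℕ) (ε : ℝ)
    (q : Fin (n + 1) → ℝ) (hqpos : ∀ i, 0 < q i)
    (hqsum : ∑ i, q i = 1)
    (M : Matrix (Fin n) (Fin n) ℝ)
    (hMinv : ∀ j : Fin n, ∑ i, (q i.succ / (1 - q 0)) * M i j = q j.succ / (1 - q 0))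
    (K : Matrix (Fin (n + 1)) (Fin (n + 1)) ℝ)
    (hK11 : K 0 0 = Real.exp ε * q 0 / (Real.exp ε * q 0 + 1 - q 0))
    (hKi1 : ∀ i : Fin n, K i.succ 0 = q 0 / (Real.exp ε * q 0 + 1 - q 0))
    (hK1j : ∀ j : Fin n, K 0 j.succ = q j.succ / (Real.exp ε * q 0 + 1 - q 0))
    (hKij : ∀ i j : Fin n, K i.succ j.succ =
      (1 - q 0 / (Real.exp ε * q 0 + 1 - q 0)) * M i j) :
    ∀ j, ∑ i, q i * K i j = q j := by
  have hrest : ∑ i : Fin n, q i.succ = 1 - q 0 := by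
    rw [Fin.sum_univ_succ] at hqsum; linarith
  have hd : Real.exp ε * q 0 + 1 - q 0 ≠ 0 := by
    refine (Real.exp_mul_add_one_sub_pos ε (hqpos 0) ?_).ne'
    rw [← sub_nonneg, ← hrest]
    exact sum_nonneg fun i _ => (hqpos i.succ).le
  intro j
  cases j using Fin.cases with
  | zero =>
    rw [Fin.sum_univ_succ, hK11]
    simp only [hKi1, ← sum_mul, hrest]
    rw [mul_div_assoc', mul_div_assoc', ← add_div, div_eq_iff hd]
    ring
  | succ j =>
    have hq0 : 1 - q 0 ≠ 0 :=
      (hrest ▸ sum_pos (fun i _ => hqpos (Fin.succ i)) ⟨j, mem_univ j⟩).ne'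
    have hMj : ∑ i, q i.succ * M i j = q j.succ := sum_mul_eq_of_sum_div_mul_eq _ hq0 (hMinv j)
    -- the first row contributes `q 0 * q j / d`, exactly what the factor `1 - q 0 / d` removes
    rw [Fin.sum_univ_succ, hK1j]
    simp only [hKij, mul_left_comm (q _), ← mul_sum, hMj]
    field_simp
    ring

/-- If additionally the inner mechanism `M` keeps the renormalized prior
`q̄ = (q_2, …, q_n)/(1 - q_1)` invariant, then the recursively constructed `K`
keeps `q` invariant: `qK = q`. -/
theorem recursive_K_invariant (n : ℕ) (ε : ℝ) (hε : 0 ≤ ε)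
    (q : Fin (n + 1) → ℝ) (hqpos : ∀ i, 0 < q i) (hqmono : Monotone q)
    (hqsum : ∑ i, q i = 1)
    (M : Matrix (Fin n) (Fin n) ℝ)
    (hMnn : ∀ i j, 0 ≤ M i j) (hMrow : ∀ i, ∑ j, M i j = 1)
    (hMinv : ∀ j : Fin n, ∑ i, (q i.succ / (1 - q 0)) * M i j = q j.succ / (1 - q 0))
    (K : Matrix (Fin (n + 1)) (Fin (n + 1)) ℝ)
    (hK11 : K 0 0 = Real.exp ε * q 0 / (Real.exp ε * q 0 + 1 - q 0))
    (hKi1 : ∀ i : Fin n, K i.succ 0 = q 0 / (Real.exp ε * q 0 + 1 - q 0))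
    (hK1j : ∀ j : Fin n, K 0 j.succ = q j.succ / (Real.exp ε * q 0 + 1 - q 0))
    (hKij : ∀ i j : Fin n, K i.succ j.succ =
      (1 - q 0 / (Real.exp ε * q 0 + 1 - q 0)) * M i j) :
    ∀ j, ∑ i, q i * K i j = q j :=
  recursive_K_invariant_general n ε q hqpos hqsum M hMinv K hK11 hKi1 hK1j hKij
end

section
/- For the increasingly sorted prior q and the optimal mechanism K produced by the recursive algorithm, the diagonal entries are non-decreasing: K_{11} ≤ K_{22} ≤ … ≤ K_{nn}. In particular min_i K_{ii} = K_{11} = e^ε q_min/(e^ε q_min + 1 − q_min). -/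
open Finset

/-- The optimal mechanism produced by the recursive algorithm of the paper, for a prior on
`Fin (n+2)` and privacy parameter `ε`. The base case is the optimal binary mechanism, and
the recursive step fills in the first row/column and scales the recursively computed block. -/
noncomputable def optK : (n : ℕ) → (Fin (n + 2) → ℝ) → ℝ → Matrix (Fin (n + 2)) (Fin (n + 2)) ℝ
  | 0, q, ε =>
    !![Real.exp ε * q 0 / (Real.exp ε * q 0 + 1 - q 0),
        (1 - q 0) / (Real.exp ε * q 0 + 1 - q 0);
      q 0 / (Real.exp ε * q 0 + 1 - q 0),
        ((Real.exp ε - 1) * q 0 + 1 - q 0) / (Real.exp ε * q 0 + 1 - q 0)]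
  | n + 1, q, ε =>
    Matrix.of fun i j =>
      Fin.cases
        (Fin.cases (Real.exp ε * q 0 / (Real.exp ε * q 0 + 1 - q 0))
          (fun j' => q j'.succ / (Real.exp ε * q 0 + 1 - q 0)) j)
        (fun i' =>
          Fin.cases (q 0 / (Real.exp ε * q 0 + 1 - q 0))
            (fun j' => (1 - q 0 / (Real.exp ε * q 0 + 1 - q 0)) *
              optK n (fun k => q k.succ / (1 - q 0)) ε i' j') j)
        i

/-! The diagonal of the recursive mechanism is `K₁₁` followed by `m` times the diagonal of the
mechanism for the renormalised tail prior `q̄`, and `m ≥ 0` because `q₁ ≤ 1/2`. So by induction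
only `K₁₁ ≤ K₂₂` has to be checked. For the binary mechanism this is again `q₁ ≤ 1/2`; in the
recursive step `K₁₁ ≤ m K̄₁₁` becomes, after clearing denominators,
`0 ≤ e^ε (1 - q₁) (q₂ - q₁)`. -/

theorem Fin.monotone_of_le_one_of_monotone_succ {α : Type*} [Preorder α] {n : ℕ}
    {f : Fin (n + 2) → α} (h01 : f 0 ≤ f 1) (hsucc : Monotone fun i : Fin (n + 1) => f i.succ) :
    Monotone f := by
  rw [← Fin.cons_self_tail f]
  exact monotone_vecCons.2 ⟨h01, hsucc⟩

theorem Fin.add_le_sum {M : Type*} [AddCommMonoid M] [PartialOrder M] [IsOrderedAddMonoid M]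
    {n : ℕ} {f : Fin (n + 2) → M} (hf : ∀ i, 0 ≤ f i) : f 0 + f 1 ≤ ∑ i, f i :=
  calc f 0 + f 1 = ∑ i ∈ {0, 1}, f i := (Finset.sum_pair (by simp)).symm
    _ ≤ ∑ i, f i := Finset.sum_le_sum_of_subset_of_nonneg (subset_univ _) fun i _ _ => hf i

theorem Fin.sum_succ_div_one_sub {K : Type*} [Field K] {n : ℕ} {q : Fin (n + 2) → K}
    (hsum : ∑ i, q i = 1) (h : q 0 ≠ 1) : ∑ i : Fin (n + 1), q i.succ / (1 - q 0) = 1 := by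
  rw [← Finset.sum_div, div_eq_one_iff_eq (sub_ne_zero.2 h.symm)]
  exact eq_sub_of_add_eq' ((Fin.sum_univ_succ q).symm.trans hsum)

section Entries

variable (ε : ℝ)

theorem optK_zero_zero : ∀ (n : ℕ) (q : Fin (n + 2) → ℝ),
    optK n q ε 0 0 = Real.exp ε * q 0 / (Real.exp ε * q 0 + 1 - q 0)
  | 0, _ => rfl
  | _ + 1, _ => rfl

theorem optK_zero_one_one (q : Fin 2 → ℝ) :
    optK 0 q ε 1 1 = ((Real.exp ε - 1) * q 0 + 1 - q 0) / (Real.exp ε * q 0 + 1 - q 0) := rfl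

theorem optK_succ_succ (n : ℕ) (q : Fin (n + 3) → ℝ) (i j : Fin (n + 2)) :
    optK (n + 1) q ε i.succ j.succ = (1 - q 0 / (Real.exp ε * q 0 + 1 - q 0)) *
      optK n (fun k => q k.succ / (1 - q 0)) ε i j := rfl

end Entries

section Arithmetic

variable {a p r : ℝ}

theorem mul_add_one_sub_pos (ha : 0 < a) (hp : 0 ≤ p) (hp1 : p < 1) : 0 < a * p + 1 - p := by
  nlinarith [mul_nonneg ha.le hp]

theorem one_sub_div_mul_add_one_sub_nonneg (ha : 0 < a) (hp : 0 ≤ p) (hp2 : 2 * p ≤ 1) :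
    0 ≤ 1 - p / (a * p + 1 - p) := by
  rw [sub_nonneg, div_le_one (mul_add_one_sub_pos ha hp (by linarith))]
  nlinarith [mul_nonneg ha.le hp]

theorem div_le_one_sub_div_mul (ha : 0 < a) (hp : 0 < p) (hpr : p ≤ r) (hpr1 : p + r ≤ 1) :
    a * p / (a * p + 1 - p) ≤
      (1 - p / (a * p + 1 - p)) * (a * (r / (1 - p)) / (a * (r / (1 - p)) + 1 - r / (1 - p))) := by
  have hp1 : 0 < 1 - p := by linarith
  have hD := mul_add_one_sub_pos ha hp.le (by linarith)
  have hE : 0 < a * r + 1 - p - r := by nlinarith [mul_pos ha (hp.trans_le hpr)]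
  have htail : a * (r / (1 - p)) / (a * (r / (1 - p)) + 1 - r / (1 - p)) =
      a * r / (a * r + 1 - p - r) := by
    have hden : a * (r / (1 - p)) + 1 - r / (1 - p) = (a * r + 1 - p - r) / (1 - p) := by
      field_simp
      ring
    rw [hden, mul_div_assoc', div_div_div_cancel_right₀ hp1.ne']
  rw [htail, one_sub_div hD.ne', div_mul_div_comm, div_le_div_iff₀ hD (mul_pos hD hE)]
  nlinarith [mul_nonneg (mul_nonneg (mul_nonneg ha.le (sub_nonneg.2 hpr)) hp1.le) hD.le]

end Arithmetic

theorem monotone_optK_diag (n : ℕ) (ε : ℝ) (q : Fin (n + 2) → ℝ) (hqpos : ∀ i, 0 < q i)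
    (hqmono : Monotone q) (hqsum : ∑ i, q i = 1) : Monotone fun i => optK n q ε i i := by
  induction n with
  | zero =>
    have hq01 : q 0 ≤ q 1 := hqmono (Fin.zero_le 1)
    have hqsum01 : q 0 + q 1 ≤ 1 := hqsum ▸ Fin.add_le_sum fun i => (hqpos i).le
    refine Fin.monotone_of_le_one_of_monotone_succ ?_ (Subsingleton.monotone (α := Fin 1) _)
    rw [optK_zero_zero, optK_zero_one_one]
    exact div_le_div_of_nonneg_right (by linarith)
      (mul_add_one_sub_pos (Real.exp_pos ε) (hqpos 0).le (by linarith)).le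
  | succ n ih =>
    have hq01 : q 0 ≤ q 1 := hqmono (Fin.zero_le 1)
    have hqsum01 : q 0 + q 1 ≤ 1 := hqsum ▸ Fin.add_le_sum fun i => (hqpos i).le
    have hq0 : q 0 < 1 := by linarith [hqpos 1]
    have htail : Monotone fun i => optK n (fun k => q k.succ / (1 - q 0)) ε i i :=
      ih _ (fun i => div_pos (hqpos _) (sub_pos.2 hq0))
        ((hqmono.comp Fin.strictMono_succ.monotone).div_const (sub_pos.2 hq0).le)
        (Fin.sum_succ_div_one_sub hqsum hq0.ne)
    refine Fin.monotone_of_le_one_of_monotone_succ ?_ ?_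
    · rw [optK_zero_zero, ← Fin.succ_zero_eq_one, optK_succ_succ, optK_zero_zero]
      exact div_le_one_sub_div_mul (Real.exp_pos ε) (hqpos 0) hq01 hqsum01
    · simp only [optK_succ_succ]
      exact htail.const_mul
        (one_sub_div_mul_add_one_sub_nonneg (Real.exp_pos ε) (hqpos 0).le (by linarith))

theorem optK_diag_monotone_general (n : ℕ) (ε : ℝ)
    (q : Fin (n + 2) → ℝ) (hqpos : ∀ i, 0 < q i) (hqmono : Monotone q)
    (hqsum : ∑ i, q i = 1) :
    Monotone (fun i => optK n q ε i i) ∧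
    optK n q ε 0 0 = Real.exp ε * q 0 / (Real.exp ε * q 0 + 1 - q 0) ∧
    (∀ i, optK n q ε 0 0 ≤ optK n q ε i i) := by
  have hmono := monotone_optK_diag n ε q hqpos hqmono hqsum
  exact ⟨hmono, optK_zero_zero ε n q, fun i => hmono (Fin.zero_le i)⟩

/-- For an increasingly sorted positive prior `q`, the diagonal entries of the mechanism
produced by the recursive algorithm are non-decreasing; in particular the minimum diagonal
entry is `K_11 = e^ε q_min/(e^ε q_min + 1 - q_min)`. -/
theorem optK_diag_monotone (n : ℕ) (ε : ℝ) (hε : 0 ≤ ε)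
    (q : Fin (n + 2) → ℝ) (hqpos : ∀ i, 0 < q i) (hqmono : Monotone q)
    (hqsum : ∑ i, q i = 1) :
    Monotone (fun i => optK n q ε i i) ∧
    optK n q ε 0 0 = Real.exp ε * q 0 / (Real.exp ε * q 0 + 1 - q 0) ∧
    (∀ i, optK n q ε 0 0 ≤ optK n q ε i i) :=
  optK_diag_monotone_general n ε q hqpos hqmono hqsum
end
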